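/- arXiv:1007.5337 — 3 statements merged into one kernel-verified Lean document; each statement's English description precedes it below -/
import Mathlib

section
/- Let M : ℝ → Matrix (Fin N) (Fin N) ℂ be continuous and suppose the symmetric real part satisfies ‖(1/2)(M(x) + M(x)*)‖ ≤ εδ for all x ≤ 0, where ε, δ > 0. Then any solution P of the matrix ODE P' = M(x)P - P M(x) on (-∞,0] satisfies ‖P(x)‖_F ≤ ‖P(y)‖_F · exp(2εδ(x - y)) for all y ≤ x ≤ 0, where ‖·‖_F is the Frobenius norm. -/
open Matrix Real

attribute [local instance] Matrix.frobeniusNormedAddCommGroup Matrix.frobeniusNormedRing Matrix.frobeniusNormedSpace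

/-!
Differentiating `‖P‖²` along the flow gives `2 Re ⟪P, M P - P M⟫`. Splitting `M` into its
Hermitian and skew-Hermitian parts, the skew-Hermitian part contributes a purely imaginary
term, so the derivative is at most `4 ‖(M + Mᴴ)/2‖ ‖P‖² ≤ 4 ε δ ‖P‖²`, and Grönwall's
inequality gives `‖P x‖² ≤ ‖P y‖² exp (4 ε δ (x - y))`.
-/

open Set RCLike ComplexConjugate
open scoped InnerProductSpace

section EnergyEstimate

variable {𝕜 E : Type*} [RCLike 𝕜] [NormedAddCommGroup E] [InnerProductSpace 𝕜 E]
  [NormedSpace ℝ E]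

theorem HasDerivAt.norm_sq_re_inner {f : ℝ → E} {f' : E} {t : ℝ} (hf : HasDerivAt f f' t) :
    HasDerivAt (‖f ·‖ ^ 2) (2 * re ⟪f t, f'⟫_𝕜) t := by
  have h := reCLM.hasFDerivAt.comp_hasDerivAt t (HasDerivAt.inner 𝕜 hf hf)
  simp only [Function.comp_def, reCLM_apply, inner_self_eq_norm_sq, map_add] at h
  rwa [inner_re_symm f', ← two_mul] at h

theorem norm_le_mul_exp_of_re_inner_deriv_le {f f' : ℝ → E} {K a b : ℝ} (hab : a ≤ b)
    (hf : ∀ t ∈ Icc a b, HasDerivAt f (f' t) t)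
    (bound : ∀ t ∈ Ico a b, re ⟪f t, f' t⟫_𝕜 ≤ K * ‖f t‖ ^ 2) :
    ‖f b‖ ≤ ‖f a‖ * exp (K * (b - a)) := by
  have hsq : ‖f b‖ ^ 2 ≤ ‖f a‖ ^ 2 * exp (2 * K * (b - a)) := by
    have h := le_gronwallBound_of_liminf_deriv_right_le (K := 2 * K) (ε := 0)
      (fun t ht => ((hf t ht).norm_sq_re_inner (𝕜 := 𝕜)).continuousAt.continuousWithinAt)
      (fun t ht _ hr => ((hf t (Ico_subset_Icc_self ht)).norm_sq_re_inner
        (𝕜 := 𝕜)).hasDerivWithinAt.liminf_right_slope_le hr)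
      le_rfl (fun t ht => by linarith [bound t ht]) b ⟨hab, le_rfl⟩
    rwa [gronwallBound_ε0] at h
  have hexp : exp (2 * K * (b - a)) = exp (K * (b - a)) ^ 2 := by
    rw [← exp_nat_mul]; ring_nf
  rw [hexp, ← mul_pow] at hsq
  exact le_of_sq_le_sq hsq (by positivity)

end EnergyEstimate

namespace Matrix

variable {m n 𝕜 : Type*} [Fintype m] [Fintype n] [RCLike 𝕜]

theorem frobenius_norm_sq_eq_re_trace (A : Matrix m n 𝕜) : ‖A‖ ^ 2 = re (Aᴴ * A).trace := by
  -- the Frobenius norm is, definitionally, the `L²` norm of the `L²` norms of the rows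
  change ‖(WithLp.toLp 2 fun i => WithLp.toLp 2 (A i) :
    PiLp 2 fun _ : m => PiLp 2 fun _ : n => 𝕜)‖ ^ 2 = _
  simp only [PiLp.norm_sq_eq_of_L2, trace, diag, mul_apply, conjTranspose_apply, map_sum]
  rw [Finset.sum_comm]
  simp [RCLike.star_def, RCLike.conj_mul]

@[reducible]
noncomputable def frobeniusInnerProductSpace : InnerProductSpace 𝕜 (Matrix m n 𝕜) where
  inner A B := (Aᴴ * B).trace
  norm_sq_eq_re_inner := frobenius_norm_sq_eq_re_trace
  conj_inner_symm A B := by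
    rw [starRingEnd_apply, ← trace_conjTranspose, conjTranspose_mul, conjTranspose_conjTranspose]
  add_left A B C := by rw [conjTranspose_add, Matrix.add_mul, trace_add]
  smul_left A B r := by
    rw [conjTranspose_smul, Matrix.smul_mul, trace_smul, smul_eq_mul, starRingEnd_apply]

attribute [local instance] frobeniusInnerProductSpace

theorem frobenius_inner_eq_trace (A B : Matrix m n 𝕜) : ⟪A, B⟫_𝕜 = (Aᴴ * B).trace := rfl

theorem frobenius_inner_mul_left (X : Matrix m m 𝕜) (A B : Matrix m n 𝕜) :
    ⟪X * A, B⟫_𝕜 = ⟪A, Xᴴ * B⟫_𝕜 := by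
  rw [frobenius_inner_eq_trace, frobenius_inner_eq_trace, conjTranspose_mul, Matrix.mul_assoc]

theorem frobenius_inner_mul_right (X : Matrix n n 𝕜) (A B : Matrix m n 𝕜) :
    ⟪A * X, B⟫_𝕜 = ⟪A, B * Xᴴ⟫_𝕜 := by
  rw [frobenius_inner_eq_trace, frobenius_inner_eq_trace, conjTranspose_mul, Matrix.mul_assoc,
    trace_mul_comm, Matrix.mul_assoc]

theorem conj_frobenius_inner_commutator (A X : Matrix n n 𝕜) :
    conj ⟪A, X * A - A * X⟫_𝕜 = ⟪A, Xᴴ * A - A * Xᴴ⟫_𝕜 := by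
  rw [inner_conj_symm, inner_sub_left, frobenius_inner_mul_left, frobenius_inner_mul_right,
    inner_sub_right]

theorem re_frobenius_inner_commutator_eq (A X : Matrix n n 𝕜) :
    re ⟪A, X * A - A * X⟫_𝕜 =
      re ⟪A, ((1 / 2 : 𝕜) • (X + Xᴴ)) * A - A * ((1 / 2 : 𝕜) • (X + Xᴴ))⟫_𝕜 := by
  have hsplit : ((1 / 2 : 𝕜) • (X + Xᴴ)) * A - A * ((1 / 2 : 𝕜) • (X + Xᴴ)) =
      (1 / 2 : 𝕜) • ((X * A - A * X) + (Xᴴ * A - A * Xᴴ)) := by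
    rw [Matrix.smul_mul, Matrix.mul_smul, ← smul_sub, Matrix.add_mul, Matrix.mul_add]
    abel_nf
  rw [hsplit, inner_smul_right, inner_add_right, ← conj_frobenius_inner_commutator,
    show (1 / 2 : 𝕜) = ((1 / 2 : ℝ) : 𝕜) by push_cast; rfl, re_ofReal_mul, map_add, conj_re]
  ring

theorem re_frobenius_inner_commutator_le (A X : Matrix n n 𝕜) :
    re ⟪A, X * A - A * X⟫_𝕜 ≤ 2 * ‖(1 / 2 : 𝕜) • (X + Xᴴ)‖ * ‖A‖ ^ 2 := by
  set S := (1 / 2 : 𝕜) • (X + Xᴴ)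
  calc re ⟪A, X * A - A * X⟫_𝕜 = re ⟪A, S * A - A * S⟫_𝕜 := re_frobenius_inner_commutator_eq A X
    _ ≤ ‖A‖ * ‖S * A - A * S‖ := (re_le_norm _).trans (norm_inner_le_norm _ _)
    _ ≤ ‖A‖ * (‖S‖ * ‖A‖ + ‖A‖ * ‖S‖) := by
        gcongr
        exact (norm_sub_le _ _).trans (add_le_add (frobenius_norm_mul _ _) (frobenius_norm_mul _ _))
    _ = 2 * ‖S‖ * ‖A‖ ^ 2 := by ring

end Matrix

attribute [local instance] Matrix.frobeniusInnerProductSpace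

theorem commutator_ode_growth_bound_general
    (N : ℕ) (M P : ℝ → Matrix (Fin N) (Fin N) ℂ) (ε δ : ℝ)
    (hRe : ∀ x : ℝ, x ≤ 0 →
      ‖(1 / 2 : ℂ) • (M x + (M x)ᴴ)‖ ≤ ε * δ)
    (hP : ∀ x : ℝ, x ≤ 0 →
      HasDerivAt P (M x * P x - P x * M x) x) :
    ∀ y x : ℝ, y ≤ x → x ≤ 0 →
      ‖P x‖ ≤ ‖P y‖ * Real.exp (2 * ε * δ * (x - y)) := by
  intro y x hyx hx0
  refine norm_le_mul_exp_of_re_inner_deriv_le (𝕜 := ℂ) hyx (fun t ht => hP t (ht.2.trans hx0))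
    fun t ht => ?_
  calc re ⟪P t, M t * P t - P t * M t⟫_ℂ
      ≤ 2 * ‖(1 / 2 : ℂ) • (M t + (M t)ᴴ)‖ * ‖P t‖ ^ 2 :=
        Matrix.re_frobenius_inner_commutator_le (P t) (M t)
    _ ≤ 2 * (ε * δ) * ‖P t‖ ^ 2 := by gcongr; exact hRe t (ht.2.le.trans hx0)
    _ = 2 * ε * δ * ‖P t‖ ^ 2 := by ring

/-- Energy (Grönwall) estimate for the commutator ODE
`P' = M P - P M`: if the symmetric real part `(1/2)(M + Mᴴ)` has (Frobenius)
norm at most `ε δ` on `(-∞,0]`, then any solution satisfies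
`‖P x‖ ≤ ‖P y‖ exp (2 ε δ (x - y))` for `y ≤ x ≤ 0`. -/
theorem commutator_ode_growth_bound
    (N : ℕ) (M P : ℝ → Matrix (Fin N) (Fin N) ℂ) (ε δ : ℝ)
    (hε : 0 < ε) (hδ : 0 < δ)
    (hMcont : Continuous M)
    (hRe : ∀ x : ℝ, x ≤ 0 →
      ‖(1 / 2 : ℂ) • (M x + (M x)ᴴ)‖ ≤ ε * δ)
    (hP : ∀ x : ℝ, x ≤ 0 →
      HasDerivAt P (M x * P x - P x * M x) x) :
    ∀ y x : ℝ, y ≤ x → x ≤ 0 →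
      ‖P x‖ ≤ ‖P y‖ * Real.exp (2 * ε * δ * (x - y)) :=
  commutator_ode_growth_bound_general N M P ε δ hRe hP
end

section
/- Fix constants C, θ, ε > 0 with ε ≤ θ/4 in appropriate smallness regime. Suppose Θ : (-∞,0] → Matrix (Fin N) (Fin N) ℂ satisfies ‖Θ(x)‖ ≤ Cε² e^{-θε|x|}, and F : {(y,x) : y ≤ x ≤ 0} → Matrix (Fin N) (Fin N) ℂ is a family of bounded operators satisfying ‖F(y,x)‖ ≤ C e^{(θε/2)(x−y)}. Then the map T defined on bounded continuous matrix-valued functions Ψ on (-∞,0] by (TΨ)(x) = ∫_{-∞}^x F(y,x) · Θ(y) · (I + Ψ(y)) dy satisfies: for all Ψ₁, Ψ₂, ‖TΨ₁ − TΨ₂‖_{L∞(-∞,x]} ≤ C₁ ε e^{-θε|x|/2} ‖Ψ₁ − Ψ₂‖_∞ for some constant C₁ depending only on C, θ; in particular, for ε small enough T is a contraction on L∞((-∞,0]). -/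
/-! The difference of the two integrals is `∫ F(y,x) Θ(y) (Ψ₁ - Ψ₂)(y) dy`, whose integrand is
bounded by `C² ε² K e^{(θε/2)(x-y)} e^{θεy}`. This kernel integrates over `(-∞, x]` to
`C² ε² K e^{θεx} / (θε/2) = (2C²/θ) ε K e^{θεx}`, and `e^{θεx} ≤ e^{-θε|x|/2}` for `x ≤ 0`. -/

open Matrix Real MeasureTheory

attribute [local instance] Matrix.frobeniusNormedAddCommGroup Matrix.frobeniusNormedRing
  Matrix.frobeniusNormedSpace

/-- Instance search does not find the `ContinuousENorm` induced by the local Frobenius norm. -/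
noncomputable instance frobeniusContinuousENormPort {m n : Type*} [Fintype m] [Fintype n] :
    ContinuousENorm (Matrix m n ℂ) :=
  @SeminormedAddGroup.toContinuousENorm _
    (Matrix.frobeniusNormedAddCommGroup).toSeminormedAddCommGroup.toSeminormedAddGroup

open Set

lemma exp_mul_sub_mul_exp_mul (a b x y : ℝ) :
    exp (a * (x - y)) * exp (b * y) = exp (a * x) * exp ((b - a) * y) := by
  rw [← exp_add, ← exp_add]
  ring_nf

lemma integrableOn_exp_mul_sub_mul_exp_mul_Iic {a b : ℝ} (hab : a < b) (x : ℝ) :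
    IntegrableOn (fun y => exp (a * (x - y)) * exp (b * y)) (Iic x) := by
  simp_rw [exp_mul_sub_mul_exp_mul]
  exact (integrableOn_exp_mul_Iic (sub_pos.2 hab) x).const_mul _

lemma integral_exp_mul_sub_mul_exp_mul_Iic {a b : ℝ} (hab : a < b) (x : ℝ) :
    ∫ y in Iic x, exp (a * (x - y)) * exp (b * y) = exp (b * x) / (b - a) := by
  simp_rw [exp_mul_sub_mul_exp_mul]
  rw [integral_const_mul, integral_exp_mul_Iic (sub_pos.2 hab), mul_div_assoc', ← exp_add]
  ring_nf

lemma norm_setIntegral_mul_mul_le_of_exp_bound_Iic {R : Type*} [NormedRing R] [NormedSpace ℝ R]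
    {F Θ Δ : ℝ → R} {a b x cF cΘ K : ℝ} (hab : a < b)
    (hF : ∀ y ≤ x, ‖F y‖ ≤ cF * exp (a * (x - y)))
    (hΘ : ∀ y ≤ x, ‖Θ y‖ ≤ cΘ * exp (b * y))
    (hΔ : ∀ y ≤ x, ‖Δ y‖ ≤ K) :
    ‖∫ y in Iic x, F y * (Θ y * Δ y)‖ ≤ cF * cΘ * K * (exp (b * x) / (b - a)) := by
  have hbound : ∀ᵐ y ∂volume.restrict (Iic x),
      ‖F y * (Θ y * Δ y)‖ ≤ cF * cΘ * K * (exp (a * (x - y)) * exp (b * y)) := by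
    filter_upwards [ae_restrict_mem measurableSet_Iic] with y (hy : y ≤ x)
    calc ‖F y * (Θ y * Δ y)‖ ≤ ‖F y‖ * (‖Θ y‖ * ‖Δ y‖) :=
          (norm_mul_le _ _).trans (by gcongr; exact norm_mul_le _ _)
      _ ≤ cF * exp (a * (x - y)) * (cΘ * exp (b * y) * K) := by
          have hΘK := mul_le_mul (hΘ y hy) (hΔ y hy) (norm_nonneg _)
            ((norm_nonneg _).trans (hΘ y hy))
          exact mul_le_mul (hF y hy) hΘK (by positivity) ((norm_nonneg _).trans (hF y hy))
      _ = cF * cΘ * K * (exp (a * (x - y)) * exp (b * y)) := by ring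
  calc ‖∫ y in Iic x, F y * (Θ y * Δ y)‖
      ≤ ∫ y in Iic x, cF * cΘ * K * (exp (a * (x - y)) * exp (b * y)) :=
        norm_integral_le_of_norm_le
          ((integrableOn_exp_mul_sub_mul_exp_mul_Iic hab x).const_mul _) hbound
    _ = cF * cΘ * K * (exp (b * x) / (b - a)) := by
        rw [integral_const_mul, integral_exp_mul_sub_mul_exp_mul_Iic hab]

/-- Contraction estimate for the fixed-point map of the
variable-coefficient conjugation lemma:
`(T Ψ)(x) = ∫_{-∞}^x F(y,x) Θ(y) (I + Ψ(y)) dy`. -/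
theorem conjugation_fixed_point_contraction
    (N : ℕ) (C θ : ℝ) (hC : 0 < C) (hθ : 0 < θ) :
    ∃ C₁ : ℝ, 0 < C₁ ∧ ∃ ε₀ : ℝ, 0 < ε₀ ∧
      ∀ ε : ℝ, 0 < ε → ε ≤ ε₀ → ε ≤ θ / 4 →
      ∀ (Θ : ℝ → Matrix (Fin N) (Fin N) ℂ)
        (F : ℝ → ℝ → Matrix (Fin N) (Fin N) ℂ),
        (∀ x : ℝ, x ≤ 0 → ‖Θ x‖ ≤ C * ε ^ 2 * Real.exp (-θ * ε * |x|)) →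
        (∀ y x : ℝ, y ≤ x → x ≤ 0 →
          ‖F y x‖ ≤ C * Real.exp (θ * ε / 2 * (x - y))) →
        ∀ (Ψ₁ Ψ₂ : ℝ → Matrix (Fin N) (Fin N) ℂ) (K : ℝ),
          (∀ y : ℝ, y ≤ 0 → ‖Ψ₁ y - Ψ₂ y‖ ≤ K) →
          (∀ x : ℝ, x ≤ 0 →
            IntegrableOn (fun y => F y x * (Θ y * (1 + Ψ₁ y))) (Set.Iic x)) →
          (∀ x : ℝ, x ≤ 0 →
            IntegrableOn (fun y => F y x * (Θ y * (1 + Ψ₂ y))) (Set.Iic x)) →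
          (∀ x : ℝ, x ≤ 0 →
            ‖(∫ y in Set.Iic x, F y x * (Θ y * (1 + Ψ₁ y))) -
              (∫ y in Set.Iic x, F y x * (Θ y * (1 + Ψ₂ y)))‖ ≤
              C₁ * ε * Real.exp (-θ * ε * |x| / 2) * K)
          ∧ C₁ * ε₀ < 1 / 2 := by
  refine ⟨2 * C ^ 2 / θ, by positivity, θ / (8 * C ^ 2), by positivity,
    fun ε hε _ _ Θ F hΘ hF Ψ₁ Ψ₂ K hK hI₁ hI₂ => ⟨fun x hx => ?_, ?_⟩⟩
  · have hK0 : 0 ≤ K := (norm_nonneg _).trans (hK 0 le_rfl)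
    have hΘ' : ∀ y ≤ x, ‖Θ y‖ ≤ C * ε ^ 2 * exp (θ * ε * y) := fun y hy => by
      have := hΘ y (hy.trans hx)
      rwa [abs_of_nonpos (hy.trans hx), show -θ * ε * -y = θ * ε * y by ring] at this
    rw [← integral_sub (hI₁ x hx) (hI₂ x hx)]
    simp_rw [← mul_sub, add_sub_add_left_eq_sub]
    calc _ ≤ C * (C * ε ^ 2) * K * (exp (θ * ε * x) / (θ * ε - θ * ε / 2)) :=
          norm_setIntegral_mul_mul_le_of_exp_bound_Iic (by linarith [mul_pos hθ hε])
            (fun y hy => hF y x hy hx) hΘ' (fun y hy => hK y (hy.trans hx))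
      _ = 2 * C ^ 2 / θ * ε * K * exp (θ * ε * x) := by
          field_simp
          ring
      _ ≤ 2 * C ^ 2 / θ * ε * K * exp (-θ * ε * |x| / 2) := by
          gcongr
          rw [abs_of_nonpos hx]
          nlinarith [mul_pos hθ hε]
      _ = 2 * C ^ 2 / θ * ε * exp (-θ * ε * |x| / 2) * K := by ring
  · have : 2 * C ^ 2 / θ * (θ / (8 * C ^ 2)) = 1 / 4 := by
      field_simp
      ring
    rw [this]
    norm_num
end

section
/- Consider the block system W' = diag(M₁, M₂)W + δ(x)Θ(x)W with W = (W₁, W₂), where Θ is uniformly bounded (‖Θ(x)‖ ≤ C_Θ), the spectral gap condition min σ(Re M₁(x)) − max σ(Re M₂(x)) ≥ η > 0 holds pointwise with η constant, and δ : ℝ → [0,∞) satisfies sup δ/η sufficiently small. Then in the scalar model case (M₁, M₂ scalar, real), there exists a bounded function Φ : ℝ → ℂ with |Φ(x)| ≤ C ∫_{-∞}^x e^{-η(x−y)} δ(y) dy ≤ C sup_{(-∞,x]}(δ/η), whose graph {(W₁, Φ W₁)} is invariant under the flow. -/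
open MeasureTheory Set Filter
open scoped NNReal


lemma Tracking.integral_exp_mul (η a b : ℝ) (hη : η ≠ 0) :
    ∫ t in a..b, Real.exp (η * t) = (Real.exp (η * b) - Real.exp (η * a)) / η := by
  rw [intervalIntegral.integral_comp_mul_left (fun t => Real.exp t) hη, integral_exp,
    smul_eq_mul]
  ring

lemma Tracking.exp_mul_integrableOn {η : ℝ} (hη : 0 < η) (x : ℝ) :
    IntegrableOn (fun y => Real.exp (η * y)) (Set.Iic x) := by
  refine integrableOn_Iic_of_intervalIntegral_norm_bounded (Real.exp (η * x) / η) x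
    (fun i => ((Real.continuous_exp.comp (continuous_const.mul continuous_id)).integrableOn_Ioc))
    tendsto_id (Eventually.of_forall fun y => ?_)
  simp only [Real.norm_of_nonneg (Real.exp_pos _).le, id]
  rw [Tracking.integral_exp_mul η y x hη.ne']
  have := (Real.exp_pos (η * y)).le
  have h2 := (Real.exp_pos (η * x)).le
  gcongr
  linarith

lemma Tracking.integral_exp_mul_Iic {η : ℝ} (hη : 0 < η) (x : ℝ) :
    ∫ y in Set.Iic x, Real.exp (η * y) = Real.exp (η * x) / η := by
  refine tendsto_nhds_unique
    (intervalIntegral_tendsto_integral_Iic x (Tracking.exp_mul_integrableOn hη x) tendsto_id) ?_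
  have h1 : Tendsto (fun y : ℝ => η * y) atBot atBot :=
    (tendsto_const_mul_atBot_of_pos hη).mpr tendsto_id
  have : Tendsto (fun y : ℝ => (Real.exp (η * x) - Real.exp (η * y)) / η) atBot
      (nhds ((Real.exp (η * x) - 0) / η)) :=
    (tendsto_const_nhds.sub (Real.tendsto_exp_atBot.comp h1)).div_const _
  simp only [sub_zero] at this
  refine this.congr fun y => ?_
  simp only [id_eq]
  rw [Tracking.integral_exp_mul η y x hη.ne']

namespace Tracking

noncomputable def AA (M₁ M₂ : ℝ → ℝ) (x : ℝ) : ℝ := ∫ t in (0:ℝ)..x, (M₁ t - M₂ t)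

def NN (Θ₁₁ Θ₁₂ Θ₂₁ Θ₂₂ : ℝ → ℂ) (Φ : ℝ → ℂ) (y : ℝ) : ℂ :=
  Θ₂₁ y + Θ₂₂ y * Φ y - Φ y * Θ₁₁ y - Φ y * Θ₁₂ y * Φ y

noncomputable def TT (M₁ M₂ δ : ℝ → ℝ) (Θ₁₁ Θ₁₂ Θ₂₁ Θ₂₂ : ℝ → ℂ) (Φ : ℝ → ℂ) (x : ℝ) : ℂ :=
  ∫ y in Set.Iic x,
    (Real.exp (AA M₁ M₂ y - AA M₁ M₂ x) : ℂ) * ((δ y : ℂ) * NN Θ₁₁ Θ₁₂ Θ₂₁ Θ₂₂ Φ y)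

variable {η CΘ : ℝ} {M₁ M₂ δ : ℝ → ℝ} {Θ₁₁ Θ₁₂ Θ₂₁ Θ₂₂ : ℝ → ℂ}

lemma hasDerivAt_AA (hM₁ : Continuous M₁) (hM₂ : Continuous M₂) (x : ℝ) :
    HasDerivAt (AA M₁ M₂) (M₁ x - M₂ x) x := by
  have hc : Continuous fun t => M₁ t - M₂ t := hM₁.sub hM₂
  exact intervalIntegral.integral_hasDerivAt_right (hc.intervalIntegrable _ _)
    (hc.stronglyMeasurableAtFilter _ _) hc.continuousAt

lemma continuous_AA (hM₁ : Continuous M₁) (hM₂ : Continuous M₂) : Continuous (AA M₁ M₂) :=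
  continuous_iff_continuousAt.mpr fun x => (hasDerivAt_AA hM₁ hM₂ x).continuousAt

lemma AA_gap (hM₁ : Continuous M₁) (hM₂ : Continuous M₂) (hgap : ∀ x, M₁ x - M₂ x ≥ η)
    {y x : ℝ} (hyx : y ≤ x) : η * (x - y) ≤ AA M₁ M₂ x - AA M₁ M₂ y := by
  have hc : Continuous fun t => M₁ t - M₂ t := hM₁.sub hM₂
  have h1 : AA M₁ M₂ x - AA M₁ M₂ y = ∫ t in y..x, (M₁ t - M₂ t) := by
    unfold AA
    rw [← intervalIntegral.integral_interval_sub_left (hc.intervalIntegrable 0 x)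
      (hc.intervalIntegrable 0 y)]
  have h2 : ∫ _t in y..x, η ≤ ∫ t in y..x, (M₁ t - M₂ t) :=
    intervalIntegral.integral_mono_on hyx intervalIntegrable_const
      (hc.intervalIntegrable _ _) fun t _ => hgap t
  rw [h1]
  rw [intervalIntegral.integral_const, smul_eq_mul, mul_comm] at h2
  exact h2

lemma ker_le (hη : 0 < η) (hM₁ : Continuous M₁) (hM₂ : Continuous M₂)
    (hgap : ∀ x, M₁ x - M₂ x ≥ η) {y x : ℝ} (hyx : y ≤ x) :
    Real.exp (AA M₁ M₂ y - AA M₁ M₂ x) ≤ Real.exp (-η * (x - y)) := by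
  have := AA_gap hM₁ hM₂ hgap hyx
  exact Real.exp_le_exp.mpr (by linarith)

lemma NN_bound (hCΘ : 0 ≤ CΘ) (hΘ : ∀ x, ‖Θ₁₁ x‖ ≤ CΘ ∧ ‖Θ₁₂ x‖ ≤ CΘ ∧ ‖Θ₂₁ x‖ ≤ CΘ ∧ ‖Θ₂₂ x‖ ≤ CΘ)
    {Φ : ℝ → ℂ} (hΦ : ∀ y, ‖Φ y‖ ≤ 1) (y : ℝ) :
    ‖NN Θ₁₁ Θ₁₂ Θ₂₁ Θ₂₂ Φ y‖ ≤ 4 * CΘ := by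
  obtain ⟨b11, b12, b21, b22⟩ := hΘ y
  have h0 : (0:ℝ) ≤ ‖Φ y‖ := norm_nonneg _
  have h1 : ‖NN Θ₁₁ Θ₁₂ Θ₂₁ Θ₂₂ Φ y‖ ≤
      ‖Θ₂₁ y‖ + ‖Θ₂₂ y‖ * ‖Φ y‖ + ‖Φ y‖ * ‖Θ₁₁ y‖ + ‖Φ y‖ * ‖Θ₁₂ y‖ * ‖Φ y‖ := by
    unfold NN
    calc ‖Θ₂₁ y + Θ₂₂ y * Φ y - Φ y * Θ₁₁ y - Φ y * Θ₁₂ y * Φ y‖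
        ≤ ‖Θ₂₁ y + Θ₂₂ y * Φ y - Φ y * Θ₁₁ y‖ + ‖Φ y * Θ₁₂ y * Φ y‖ := norm_sub_le _ _
      _ ≤ ‖Θ₂₁ y + Θ₂₂ y * Φ y‖ + ‖Φ y * Θ₁₁ y‖ + ‖Φ y * Θ₁₂ y * Φ y‖ := by
          gcongr; exact norm_sub_le _ _
      _ ≤ ‖Θ₂₁ y‖ + ‖Θ₂₂ y * Φ y‖ + ‖Φ y * Θ₁₁ y‖ + ‖Φ y * Θ₁₂ y * Φ y‖ := by
          gcongr; exact norm_add_le _ _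
      _ = ‖Θ₂₁ y‖ + ‖Θ₂₂ y‖ * ‖Φ y‖ + ‖Φ y‖ * ‖Θ₁₁ y‖ + ‖Φ y‖ * ‖Θ₁₂ y‖ * ‖Φ y‖ := by
          simp [norm_mul]
  have hΦy := hΦ y
  have t1 : ‖Θ₂₂ y‖ * ‖Φ y‖ ≤ CΘ * 1 :=
    mul_le_mul b22 hΦy h0 hCΘ
  have t2 : ‖Φ y‖ * ‖Θ₁₁ y‖ ≤ 1 * CΘ :=
    mul_le_mul hΦy b11 (norm_nonneg _) zero_le_one
  have t3 : ‖Φ y‖ * ‖Θ₁₂ y‖ * ‖Φ y‖ ≤ 1 * CΘ * 1 :=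
    mul_le_mul (mul_le_mul hΦy b12 (norm_nonneg _) zero_le_one) hΦy h0
      (by positivity)
  linarith

lemma NN_lip (hCΘ : 0 ≤ CΘ) (hΘ : ∀ x, ‖Θ₁₁ x‖ ≤ CΘ ∧ ‖Θ₁₂ x‖ ≤ CΘ ∧ ‖Θ₂₁ x‖ ≤ CΘ ∧ ‖Θ₂₂ x‖ ≤ CΘ)
    {Φ Ψ : ℝ → ℂ} (hΦ : ∀ y, ‖Φ y‖ ≤ 1) (hΨ : ∀ y, ‖Ψ y‖ ≤ 1) (y : ℝ) :
    ‖NN Θ₁₁ Θ₁₂ Θ₂₁ Θ₂₂ Φ y - NN Θ₁₁ Θ₁₂ Θ₂₁ Θ₂₂ Ψ y‖ ≤ 4 * CΘ * ‖Φ y - Ψ y‖ := by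
  obtain ⟨b11, b12, b21, b22⟩ := hΘ y
  have key : NN Θ₁₁ Θ₁₂ Θ₂₁ Θ₂₂ Φ y - NN Θ₁₁ Θ₁₂ Θ₂₁ Θ₂₂ Ψ y =
      Θ₂₂ y * (Φ y - Ψ y) - (Φ y - Ψ y) * Θ₁₁ y -
        ((Φ y - Ψ y) * Θ₁₂ y * Φ y + Ψ y * Θ₁₂ y * (Φ y - Ψ y)) := by
    unfold NN; ring
  rw [key]
  have h0 : (0:ℝ) ≤ ‖Φ y - Ψ y‖ := norm_nonneg _
  calc ‖Θ₂₂ y * (Φ y - Ψ y) - (Φ y - Ψ y) * Θ₁₁ y -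
        ((Φ y - Ψ y) * Θ₁₂ y * Φ y + Ψ y * Θ₁₂ y * (Φ y - Ψ y))‖
      ≤ ‖Θ₂₂ y * (Φ y - Ψ y) - (Φ y - Ψ y) * Θ₁₁ y‖ +
        ‖(Φ y - Ψ y) * Θ₁₂ y * Φ y + Ψ y * Θ₁₂ y * (Φ y - Ψ y)‖ := norm_sub_le _ _
    _ ≤ (‖Θ₂₂ y * (Φ y - Ψ y)‖ + ‖(Φ y - Ψ y) * Θ₁₁ y‖) +
        (‖(Φ y - Ψ y) * Θ₁₂ y * Φ y‖ + ‖Ψ y * Θ₁₂ y * (Φ y - Ψ y)‖) :=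
        add_le_add (norm_sub_le _ _) (norm_add_le _ _)
    _ = ‖Θ₂₂ y‖ * ‖Φ y - Ψ y‖ + ‖Φ y - Ψ y‖ * ‖Θ₁₁ y‖ +
        (‖Φ y - Ψ y‖ * ‖Θ₁₂ y‖ * ‖Φ y‖ + ‖Ψ y‖ * ‖Θ₁₂ y‖ * ‖Φ y - Ψ y‖) := by
        simp [norm_mul]
    _ ≤ 4 * CΘ * ‖Φ y - Ψ y‖ := by
        have t1 : ‖Θ₂₂ y‖ * ‖Φ y - Ψ y‖ ≤ CΘ * ‖Φ y - Ψ y‖ :=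
          mul_le_mul_of_nonneg_right b22 h0
        have t2 : ‖Φ y - Ψ y‖ * ‖Θ₁₁ y‖ ≤ ‖Φ y - Ψ y‖ * CΘ :=
          mul_le_mul_of_nonneg_left b11 h0
        have t3 : ‖Φ y - Ψ y‖ * ‖Θ₁₂ y‖ * ‖Φ y‖ ≤ ‖Φ y - Ψ y‖ * CΘ * 1 :=
          mul_le_mul (mul_le_mul_of_nonneg_left b12 h0) (hΦ y) (norm_nonneg _)
            (by positivity)
        have t4 : ‖Ψ y‖ * ‖Θ₁₂ y‖ * ‖Φ y - Ψ y‖ ≤ 1 * CΘ * ‖Φ y - Ψ y‖ :=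
          mul_le_mul_of_nonneg_right
            (mul_le_mul (hΨ y) b12 (norm_nonneg _) zero_le_one) h0
        nlinarith

lemma continuous_NN (h11 : Continuous Θ₁₁) (h12 : Continuous Θ₁₂) (h21 : Continuous Θ₂₁)
    (h22 : Continuous Θ₂₂) {Φ : ℝ → ℂ} (hΦ : Continuous Φ) :
    Continuous (NN Θ₁₁ Θ₁₂ Θ₂₁ Θ₂₂ Φ) := by
  unfold NN
  fun_prop

lemma weight_integrableOn (hη : 0 < η) (hδc : Continuous δ) (hδ0 : ∀ y, 0 ≤ δ y)
    {x c : ℝ} (hc : 0 ≤ c) (hδb : ∀ y ∈ Set.Iic x, δ y ≤ c) :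
    IntegrableOn (fun y => Real.exp (-η * (x - y)) * δ y) (Set.Iic x) := by
  have hg : IntegrableOn (fun y => Real.exp (-η * x) * Real.exp (η * y) * c)
      (Set.Iic x) := ((Tracking.exp_mul_integrableOn hη x).const_mul _).mul_const _
  refine Integrable.mono hg ?_ ?_
  · exact ((Real.continuous_exp.comp (by fun_prop)).mul hδc).aestronglyMeasurable.restrict
  · rw [ae_restrict_iff' measurableSet_Iic]
    refine ae_of_all _ fun y hy => ?_
    have h1 : 0 ≤ δ y := hδ0 y
    rw [Real.norm_of_nonneg (by positivity), Real.norm_of_nonneg (by positivity)]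
    have h2 : -η * (x - y) = -η * x + η * y := by ring
    rw [h2, Real.exp_add]
    exact mul_le_mul_of_nonneg_left (hδb y hy) (by positivity)

lemma weight_nonneg (hδ0 : ∀ y, 0 ≤ δ y) (x : ℝ) :
    0 ≤ ∫ y in Set.Iic x, Real.exp (-η * (x - y)) * δ y :=
  setIntegral_nonneg measurableSet_Iic fun y _ => by
    have := hδ0 y; positivity

lemma weight_integral_le (hη : 0 < η) (hδc : Continuous δ) (hδ0 : ∀ y, 0 ≤ δ y)
    {x c : ℝ} (hc : 0 ≤ c) (hδb : ∀ y ∈ Set.Iic x, δ y ≤ c) :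
    ∫ y in Set.Iic x, Real.exp (-η * (x - y)) * δ y ≤ c / η := by
  have hg : IntegrableOn (fun y => Real.exp (-η * x) * Real.exp (η * y) * c)
      (Set.Iic x) := ((Tracking.exp_mul_integrableOn hη x).const_mul _).mul_const _
  have h1 : ∫ y in Set.Iic x, Real.exp (-η * (x - y)) * δ y ≤
      ∫ y in Set.Iic x, Real.exp (-η * x) * Real.exp (η * y) * c := by
    refine setIntegral_mono_on (weight_integrableOn hη hδc hδ0 hc hδb) hg
      measurableSet_Iic fun y hy => ?_
    have h2 : -η * (x - y) = -η * x + η * y := by ring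
    rw [h2, Real.exp_add]
    exact mul_le_mul_of_nonneg_left (hδb y hy) (by positivity)
  refine h1.trans (le_of_eq ?_)
  rw [integral_mul_const, integral_const_mul, Tracking.integral_exp_mul_Iic hη x]
  have he : Real.exp (-η * x) * Real.exp (η * x) = 1 := by
    rw [← Real.exp_add]
    norm_num
  calc Real.exp (-η * x) * (Real.exp (η * x) / η) * c
      = Real.exp (-η * x) * Real.exp (η * x) * c / η := by ring
    _ = c / η := by rw [he, one_mul]

variable {Φ Ψ : ℝ → ℂ}

lemma integrand_norm_le (hη : 0 < η) (hCΘ : 0 ≤ CΘ) (hM₁ : Continuous M₁)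
    (hM₂ : Continuous M₂) (hgap : ∀ x, M₁ x - M₂ x ≥ η)
    (hΘ : ∀ x, ‖Θ₁₁ x‖ ≤ CΘ ∧ ‖Θ₁₂ x‖ ≤ CΘ ∧ ‖Θ₂₁ x‖ ≤ CΘ ∧ ‖Θ₂₂ x‖ ≤ CΘ)
    (hδ0 : ∀ y, 0 ≤ δ y) (hΦ : ∀ y, ‖Φ y‖ ≤ 1) {x y : ℝ} (hy : y ∈ Set.Iic x) :
    ‖(Real.exp (AA M₁ M₂ y - AA M₁ M₂ x) : ℂ) *
        ((δ y : ℂ) * NN Θ₁₁ Θ₁₂ Θ₂₁ Θ₂₂ Φ y)‖ ≤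
      4 * CΘ * (Real.exp (-η * (x - y)) * δ y) := by
  have h1 : ‖(Real.exp (AA M₁ M₂ y - AA M₁ M₂ x) : ℂ) *
      ((δ y : ℂ) * NN Θ₁₁ Θ₁₂ Θ₂₁ Θ₂₂ Φ y)‖ =
      Real.exp (AA M₁ M₂ y - AA M₁ M₂ x) * (δ y * ‖NN Θ₁₁ Θ₁₂ Θ₂₁ Θ₂₂ Φ y‖) := by
    rw [norm_mul, norm_mul, Complex.norm_real, Complex.norm_real,
      Real.norm_of_nonneg (Real.exp_pos _).le, Real.norm_of_nonneg (hδ0 y)]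
  rw [h1]
  have h2 := ker_le (η := η) hη hM₁ hM₂ hgap hy
  have h3 := NN_bound hCΘ hΘ hΦ y
  have h4 := hδ0 y
  have h5 : (0:ℝ) ≤ Real.exp (AA M₁ M₂ y - AA M₁ M₂ x) := (Real.exp_pos _).le
  have h6 : (0:ℝ) ≤ ‖NN Θ₁₁ Θ₁₂ Θ₂₁ Θ₂₂ Φ y‖ := norm_nonneg _
  calc Real.exp (AA M₁ M₂ y - AA M₁ M₂ x) * (δ y * ‖NN Θ₁₁ Θ₁₂ Θ₂₁ Θ₂₂ Φ y‖)
      ≤ Real.exp (-η * (x - y)) * (δ y * (4 * CΘ)) := by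
        apply mul_le_mul h2 (mul_le_mul_of_nonneg_left h3 h4) (by positivity)
          (Real.exp_pos _).le
    _ = 4 * CΘ * (Real.exp (-η * (x - y)) * δ y) := by ring

lemma integrand_integrableOn (hη : 0 < η) (hCΘ : 0 ≤ CΘ) (hM₁ : Continuous M₁)
    (hM₂ : Continuous M₂) (hδc : Continuous δ)
    (h11 : Continuous Θ₁₁) (h12 : Continuous Θ₁₂) (h21 : Continuous Θ₂₁)
    (h22 : Continuous Θ₂₂)
    (hgap : ∀ x, M₁ x - M₂ x ≥ η)
    (hΘ : ∀ x, ‖Θ₁₁ x‖ ≤ CΘ ∧ ‖Θ₁₂ x‖ ≤ CΘ ∧ ‖Θ₂₁ x‖ ≤ CΘ ∧ ‖Θ₂₂ x‖ ≤ CΘ)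
    (hδ0 : ∀ y, 0 ≤ δ y) {c : ℝ} (hc : 0 ≤ c) (hδb : ∀ y, δ y ≤ c)
    (hΦc : Continuous Φ) (hΦ : ∀ y, ‖Φ y‖ ≤ 1) (x : ℝ) :
    IntegrableOn (fun y => (Real.exp (AA M₁ M₂ y - AA M₁ M₂ x) : ℂ) *
      ((δ y : ℂ) * NN Θ₁₁ Θ₁₂ Θ₂₁ Θ₂₂ Φ y)) (Set.Iic x) := by
  have hg : IntegrableOn (fun y => 4 * CΘ * (Real.exp (-η * (x - y)) * δ y))
      (Set.Iic x) :=
    (weight_integrableOn hη hδc hδ0 hc fun y _ => hδb y).const_mul _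
  refine Integrable.mono hg ?_ ?_
  · have hcont : Continuous fun y => (Real.exp (AA M₁ M₂ y - AA M₁ M₂ x) : ℂ) *
        ((δ y : ℂ) * NN Θ₁₁ Θ₁₂ Θ₂₁ Θ₂₂ Φ y) := by
      have hAA := continuous_AA hM₁ hM₂
      have hNN := continuous_NN h11 h12 h21 h22 hΦc
      fun_prop
    exact hcont.aestronglyMeasurable.restrict
  · rw [ae_restrict_iff' measurableSet_Iic]
    refine ae_of_all _ fun y hy => ?_
    refine (integrand_norm_le hη hCΘ hM₁ hM₂ hgap hΘ hδ0 hΦ hy).trans ?_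
    rw [Real.norm_of_nonneg (by have := hδ0 y; positivity)]

lemma TT_norm_le (hη : 0 < η) (hCΘ : 0 ≤ CΘ) (hM₁ : Continuous M₁)
    (hM₂ : Continuous M₂) (hδc : Continuous δ)
    (h11 : Continuous Θ₁₁) (h12 : Continuous Θ₁₂) (h21 : Continuous Θ₂₁)
    (h22 : Continuous Θ₂₂)
    (hgap : ∀ x, M₁ x - M₂ x ≥ η)
    (hΘ : ∀ x, ‖Θ₁₁ x‖ ≤ CΘ ∧ ‖Θ₁₂ x‖ ≤ CΘ ∧ ‖Θ₂₁ x‖ ≤ CΘ ∧ ‖Θ₂₂ x‖ ≤ CΘ)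
    (hδ0 : ∀ y, 0 ≤ δ y) {c : ℝ} (hc : 0 ≤ c) (hδb : ∀ y, δ y ≤ c)
    (hΦc : Continuous Φ) (hΦ : ∀ y, ‖Φ y‖ ≤ 1) (x : ℝ) :
    ‖TT M₁ M₂ δ Θ₁₁ Θ₁₂ Θ₂₁ Θ₂₂ Φ x‖ ≤
      4 * CΘ * ∫ y in Set.Iic x, Real.exp (-η * (x - y)) * δ y := by
  unfold TT
  refine (norm_integral_le_integral_norm _).trans ?_
  have h1 : ∫ y in Set.Iic x, ‖(Real.exp (AA M₁ M₂ y - AA M₁ M₂ x) : ℂ) *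
      ((δ y : ℂ) * NN Θ₁₁ Θ₁₂ Θ₂₁ Θ₂₂ Φ y)‖ ≤
      ∫ y in Set.Iic x, 4 * CΘ * (Real.exp (-η * (x - y)) * δ y) := by
    refine setIntegral_mono_on
      ((integrand_integrableOn hη hCΘ hM₁ hM₂ hδc h11 h12 h21 h22 hgap hΘ hδ0 hc hδb
        hΦc hΦ x).norm) ((weight_integrableOn hη hδc hδ0 hc fun y _ => hδb y).const_mul _)
      measurableSet_Iic fun y hy =>
        integrand_norm_le hη hCΘ hM₁ hM₂ hgap hΘ hδ0 hΦ hy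
  refine h1.trans_eq ?_
  rw [integral_const_mul]

lemma TT_sub_norm_le (hη : 0 < η) (hCΘ : 0 ≤ CΘ) (hM₁ : Continuous M₁)
    (hM₂ : Continuous M₂) (hδc : Continuous δ)
    (h11 : Continuous Θ₁₁) (h12 : Continuous Θ₁₂) (h21 : Continuous Θ₂₁)
    (h22 : Continuous Θ₂₂)
    (hgap : ∀ x, M₁ x - M₂ x ≥ η)
    (hΘ : ∀ x, ‖Θ₁₁ x‖ ≤ CΘ ∧ ‖Θ₁₂ x‖ ≤ CΘ ∧ ‖Θ₂₁ x‖ ≤ CΘ ∧ ‖Θ₂₂ x‖ ≤ CΘ)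
    (hδ0 : ∀ y, 0 ≤ δ y) {c : ℝ} (hc : 0 ≤ c) (hδb : ∀ y, δ y ≤ c)
    (hΦc : Continuous Φ) (hΦ : ∀ y, ‖Φ y‖ ≤ 1)
    (hΨc : Continuous Ψ) (hΨ : ∀ y, ‖Ψ y‖ ≤ 1)
    {d : ℝ} (hd : 0 ≤ d) (hdist : ∀ y, ‖Φ y - Ψ y‖ ≤ d) (x : ℝ) :
    ‖TT M₁ M₂ δ Θ₁₁ Θ₁₂ Θ₂₁ Θ₂₂ Φ x - TT M₁ M₂ δ Θ₁₁ Θ₁₂ Θ₂₁ Θ₂₂ Ψ x‖ ≤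
      4 * CΘ * d * ∫ y in Set.Iic x, Real.exp (-η * (x - y)) * δ y := by
  have hIΦ := integrand_integrableOn hη hCΘ hM₁ hM₂ hδc h11 h12 h21 h22 hgap hΘ hδ0
    hc hδb hΦc hΦ x
  have hIΨ := integrand_integrableOn hη hCΘ hM₁ hM₂ hδc h11 h12 h21 h22 hgap hΘ hδ0
    hc hδb hΨc hΨ x
  have hsub : TT M₁ M₂ δ Θ₁₁ Θ₁₂ Θ₂₁ Θ₂₂ Φ x - TT M₁ M₂ δ Θ₁₁ Θ₁₂ Θ₂₁ Θ₂₂ Ψ x =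
      ∫ y in Set.Iic x, (Real.exp (AA M₁ M₂ y - AA M₁ M₂ x) : ℂ) *
        ((δ y : ℂ) * (NN Θ₁₁ Θ₁₂ Θ₂₁ Θ₂₂ Φ y - NN Θ₁₁ Θ₁₂ Θ₂₁ Θ₂₂ Ψ y)) := by
    unfold TT
    rw [← integral_sub hIΦ hIΨ]
    congr 1
    funext y
    ring
  rw [hsub]
  refine (norm_integral_le_integral_norm _).trans ?_
  have hdom : IntegrableOn (fun y => 4 * CΘ * d * (Real.exp (-η * (x - y)) * δ y))
      (Set.Iic x) :=
    (weight_integrableOn hη hδc hδ0 hc fun y _ => hδb y).const_mul _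
  have h1 : ∫ y in Set.Iic x, ‖(Real.exp (AA M₁ M₂ y - AA M₁ M₂ x) : ℂ) *
      ((δ y : ℂ) * (NN Θ₁₁ Θ₁₂ Θ₂₁ Θ₂₂ Φ y - NN Θ₁₁ Θ₁₂ Θ₂₁ Θ₂₂ Ψ y))‖ ≤
      ∫ y in Set.Iic x, 4 * CΘ * d * (Real.exp (-η * (x - y)) * δ y) := by
    refine setIntegral_mono_on ((hIΦ.sub hIΨ).congr (ae_of_all _ fun y => by simp only [Pi.sub_apply]; ring)).norm
      hdom measurableSet_Iic fun y hy => ?_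
    have h2 : ‖(Real.exp (AA M₁ M₂ y - AA M₁ M₂ x) : ℂ) *
        ((δ y : ℂ) * (NN Θ₁₁ Θ₁₂ Θ₂₁ Θ₂₂ Φ y - NN Θ₁₁ Θ₁₂ Θ₂₁ Θ₂₂ Ψ y))‖ =
        Real.exp (AA M₁ M₂ y - AA M₁ M₂ x) *
          (δ y * ‖NN Θ₁₁ Θ₁₂ Θ₂₁ Θ₂₂ Φ y - NN Θ₁₁ Θ₁₂ Θ₂₁ Θ₂₂ Ψ y‖) := by
      rw [norm_mul, norm_mul, Complex.norm_real, Complex.norm_real,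
        Real.norm_of_nonneg (Real.exp_pos _).le, Real.norm_of_nonneg (hδ0 y)]
    rw [h2]
    have h3 := ker_le (η := η) hη hM₁ hM₂ hgap hy
    have h4 := (NN_lip hCΘ hΘ hΦ hΨ y).trans
      (mul_le_mul_of_nonneg_left (hdist y) (by positivity))
    have h5 := hδ0 y
    calc Real.exp (AA M₁ M₂ y - AA M₁ M₂ x) *
          (δ y * ‖NN Θ₁₁ Θ₁₂ Θ₂₁ Θ₂₂ Φ y - NN Θ₁₁ Θ₁₂ Θ₂₁ Θ₂₂ Ψ y‖)
        ≤ Real.exp (-η * (x - y)) * (δ y * (4 * CΘ * d)) := by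
          apply mul_le_mul h3 (mul_le_mul_of_nonneg_left h4 h5) (by positivity)
            (Real.exp_pos _).le
      _ = 4 * CΘ * d * (Real.exp (-η * (x - y)) * δ y) := by ring
  refine h1.trans_eq ?_
  rw [integral_const_mul]

lemma TT_hasDerivAt (hη : 0 < η) (hCΘ : 0 ≤ CΘ) (hM₁ : Continuous M₁)
    (hM₂ : Continuous M₂) (hδc : Continuous δ)
    (h11 : Continuous Θ₁₁) (h12 : Continuous Θ₁₂) (h21 : Continuous Θ₂₁)
    (h22 : Continuous Θ₂₂)
    (hgap : ∀ x, M₁ x - M₂ x ≥ η)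
    (hΘ : ∀ x, ‖Θ₁₁ x‖ ≤ CΘ ∧ ‖Θ₁₂ x‖ ≤ CΘ ∧ ‖Θ₂₁ x‖ ≤ CΘ ∧ ‖Θ₂₂ x‖ ≤ CΘ)
    (hδ0 : ∀ y, 0 ≤ δ y) {c : ℝ} (hc : 0 ≤ c) (hδb : ∀ y, δ y ≤ c)
    (hΦc : Continuous Φ) (hΦ : ∀ y, ‖Φ y‖ ≤ 1) (x : ℝ) :
    HasDerivAt (TT M₁ M₂ δ Θ₁₁ Θ₁₂ Θ₂₁ Θ₂₂ Φ)
      (((M₂ x : ℂ) - (M₁ x : ℂ)) * TT M₁ M₂ δ Θ₁₁ Θ₁₂ Θ₂₁ Θ₂₂ Φ x +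
        (δ x : ℂ) * NN Θ₁₁ Θ₁₂ Θ₂₁ Θ₂₂ Φ x) x := by
  set F : ℝ → ℂ := fun y => (Real.exp (AA M₁ M₂ y) : ℂ) *
    ((δ y : ℂ) * NN Θ₁₁ Θ₁₂ Θ₂₁ Θ₂₂ Φ y) with hF
  set G : ℝ → ℂ := fun u => ∫ y in Set.Iic u, F y with hG
  have hexpmul : ∀ u y : ℝ, (Real.exp (AA M₁ M₂ u) : ℂ) *
      (Real.exp (AA M₁ M₂ y - AA M₁ M₂ u) : ℂ) = (Real.exp (AA M₁ M₂ y) : ℂ) := by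
    intro u y
    rw [← Complex.ofReal_mul, ← Real.exp_add]
    norm_num
  have hFint : ∀ u : ℝ, IntegrableOn F (Set.Iic u) := by
    intro u
    refine ((integrand_integrableOn hη hCΘ hM₁ hM₂ hδc h11 h12 h21 h22 hgap hΘ hδ0
      hc hδb hΦc hΦ u).const_mul ((Real.exp (AA M₁ M₂ u) : ℂ))).congr
      (ae_of_all _ fun y => ?_)
    simp only
    rw [← mul_assoc, hexpmul u y]
  have hGF : ∀ u : ℝ, TT M₁ M₂ δ Θ₁₁ Θ₁₂ Θ₂₁ Θ₂₂ Φ u =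
      (Real.exp (-AA M₁ M₂ u) : ℂ) * G u := by
    intro u
    rw [hG]
    unfold TT
    rw [← integral_const_mul]
    congr 1
    funext y
    have h2 : (Real.exp (-AA M₁ M₂ u) : ℂ) * (Real.exp (AA M₁ M₂ y) : ℂ) =
        (Real.exp (AA M₁ M₂ y - AA M₁ M₂ u) : ℂ) := by
      rw [← Complex.ofReal_mul, ← Real.exp_add, neg_add_eq_sub]
    show (Real.exp (AA M₁ M₂ y - AA M₁ M₂ u) : ℂ) *
        ((δ y : ℂ) * NN Θ₁₁ Θ₁₂ Θ₂₁ Θ₂₂ Φ y) =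
      (Real.exp (-AA M₁ M₂ u) : ℂ) * ((Real.exp (AA M₁ M₂ y) : ℂ) *
        ((δ y : ℂ) * NN Θ₁₁ Θ₁₂ Θ₂₁ Θ₂₂ Φ y))
    linear_combination (-((δ y : ℂ) * NN Θ₁₁ Θ₁₂ Θ₂₁ Θ₂₂ Φ y)) * h2
  have hFcont : Continuous F := by
    have hAA := continuous_AA hM₁ hM₂
    have hNN := continuous_NN h11 h12 h21 h22 hΦc
    rw [hF]
    fun_prop
  have hrepr : ∀ u : ℝ, G u = G x + ∫ t in x..u, F t := by
    intro u
    have := intervalIntegral.integral_Iic_sub_Iic (hFint x) (hFint u)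
    rw [hG]
    simp only at this ⊢
    linear_combination this
  have hFT : HasDerivAt (fun u => ∫ t in x..u, F t) (F x) x :=
    intervalIntegral.integral_hasDerivAt_right (hFcont.intervalIntegrable _ _)
      (hFcont.stronglyMeasurableAtFilter _ _) hFcont.continuousAt
  have hGd : HasDerivAt G (F x) x := by
    refine HasDerivAt.congr_of_eventuallyEq ((hFT.const_add (G x)))
      (Filter.Eventually.of_forall fun u => hrepr u)
  have hAAd := hasDerivAt_AA hM₁ hM₂ x
  have hexpd : HasDerivAt (fun u => ((Real.exp (-AA M₁ M₂ u) : ℝ) : ℂ))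
      ((Real.exp (-AA M₁ M₂ x) * -(M₁ x - M₂ x) : ℝ) : ℂ) x :=
    (hAAd.neg.exp).ofReal_comp
  have hprod := hexpd.mul hGd
  have hkey : (Real.exp (-AA M₁ M₂ x) : ℂ) * (Real.exp (AA M₁ M₂ x) : ℂ) = 1 := by
    rw [← Complex.ofReal_mul, ← Real.exp_add]
    norm_num
  have hfinal : HasDerivAt (TT M₁ M₂ δ Θ₁₁ Θ₁₂ Θ₂₁ Θ₂₂ Φ)
      (((Real.exp (-AA M₁ M₂ x) * -(M₁ x - M₂ x) : ℝ) : ℂ) * G x +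
        (Real.exp (-AA M₁ M₂ x) : ℂ) * F x) x :=
    HasDerivAt.congr_of_eventuallyEq hprod (Filter.Eventually.of_forall fun u => hGF u)
  convert hfinal using 1
  rw [hGF x]
  simp only [hF]
  rw [Complex.ofReal_mul, Complex.ofReal_neg, Complex.ofReal_sub]
  linear_combination (-((δ x : ℂ) * NN Θ₁₁ Θ₁₂ Θ₂₁ Θ₂₂ Φ x)) * hkey

lemma TT_continuous (hη : 0 < η) (hCΘ : 0 ≤ CΘ) (hM₁ : Continuous M₁)
    (hM₂ : Continuous M₂) (hδc : Continuous δ)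
    (h11 : Continuous Θ₁₁) (h12 : Continuous Θ₁₂) (h21 : Continuous Θ₂₁)
    (h22 : Continuous Θ₂₂)
    (hgap : ∀ x, M₁ x - M₂ x ≥ η)
    (hΘ : ∀ x, ‖Θ₁₁ x‖ ≤ CΘ ∧ ‖Θ₁₂ x‖ ≤ CΘ ∧ ‖Θ₂₁ x‖ ≤ CΘ ∧ ‖Θ₂₂ x‖ ≤ CΘ)
    (hδ0 : ∀ y, 0 ≤ δ y) {c : ℝ} (hc : 0 ≤ c) (hδb : ∀ y, δ y ≤ c)
    (hΦc : Continuous Φ) (hΦ : ∀ y, ‖Φ y‖ ≤ 1) :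
    Continuous (TT M₁ M₂ δ Θ₁₁ Θ₁₂ Θ₂₁ Θ₂₂ Φ) :=
  continuous_iff_continuousAt.mpr fun x =>
    (TT_hasDerivAt hη hCΘ hM₁ hM₂ hδc h11 h12 h21 h22 hgap hΘ hδ0 hc hδb hΦc hΦ
      x).continuousAt

lemma main (hη : 0 < η) (hCΘ : 0 < CΘ)
    (hM₁ : Continuous M₁) (hM₂ : Continuous M₂) (hδc : Continuous δ)
    (h11 : Continuous Θ₁₁) (h12 : Continuous Θ₁₂) (h21 : Continuous Θ₂₁)
    (h22 : Continuous Θ₂₂)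
    (hgap : ∀ x, M₁ x - M₂ x ≥ η)
    (hΘ : ∀ x, ‖Θ₁₁ x‖ ≤ CΘ ∧ ‖Θ₁₂ x‖ ≤ CΘ ∧ ‖Θ₂₁ x‖ ≤ CΘ ∧ ‖Θ₂₂ x‖ ≤ CΘ)
    (hδ0 : ∀ x, 0 ≤ δ x) (hδb : ∀ x, δ x ≤ 1 / (8 * CΘ) * η) :
    ∃ Φ : ℝ → ℂ,
      (∀ x : ℝ, HasDerivAt Φ
        ((M₂ x : ℂ) * Φ x - Φ x * (M₁ x : ℂ) +
          (δ x : ℂ) * (Θ₂₁ x + Θ₂₂ x * Φ x - Φ x * Θ₁₁ x - Φ x * Θ₁₂ x * Φ x)) x) ∧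
      (∀ x : ℝ, ‖Φ x‖ ≤ 4 * CΘ * ∫ y in Set.Iic x, Real.exp (-η * (x - y)) * δ y) ∧
      (∀ x : ℝ, 4 * CΘ * ∫ y in Set.Iic x, Real.exp (-η * (x - y)) * δ y ≤
        4 * CΘ * sSup ((fun y => δ y / η) '' Set.Iic x)) := by
  have hCΘ' : (0:ℝ) ≤ CΘ := hCΘ.le
  set c : ℝ := 1 / (8 * CΘ) * η with hcdef
  have hc : 0 ≤ c := by positivity
  have hcη : c / η = 1 / (8 * CΘ) := by
    rw [hcdef, mul_div_assoc, div_self hη.ne', mul_one]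
  have hwle : ∀ x : ℝ, ∫ y in Set.Iic x, Real.exp (-η * (x - y)) * δ y ≤ 1 / (8 * CΘ) :=
    fun x => (weight_integral_le hη hδc hδ0 hc fun y _ => hδb y).trans_eq hcη
  have hwnn : ∀ x : ℝ, 0 ≤ ∫ y in Set.Iic x, Real.exp (-η * (x - y)) * δ y :=
    fun x => weight_nonneg hδ0 x
  -- the closed unit ball in bounded continuous functions
  set B : Set (BoundedContinuousFunction ℝ ℂ) :=
    Metric.closedBall (0 : BoundedContinuousFunction ℝ ℂ) 1 with hBdef
  haveI : CompleteSpace ↥B := (Metric.isClosed_closedBall).completeSpace_coe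
  haveI : Nonempty ↥B := ⟨⟨0, by simp [hBdef]⟩⟩
  have hmem : ∀ f : ↥B, ∀ y : ℝ, ‖(f : BoundedContinuousFunction ℝ ℂ) y‖ ≤ 1 := by
    intro f y
    have h1 : ‖(f : BoundedContinuousFunction ℝ ℂ)‖ ≤ 1 := by
      have h2 : dist (f : BoundedContinuousFunction ℝ ℂ) 0 ≤ 1 := f.2
      simpa [dist_zero_right] using h2
    exact (BoundedContinuousFunction.norm_coe_le_norm _ y).trans h1
  have hTTb : ∀ f : ↥B, ∀ x : ℝ,
      ‖TT M₁ M₂ δ Θ₁₁ Θ₁₂ Θ₂₁ Θ₂₂ (⇑(f : BoundedContinuousFunction ℝ ℂ)) x‖ ≤ 1 := by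
    intro f x
    have h1 := TT_norm_le hη hCΘ' hM₁ hM₂ hδc h11 h12 h21 h22 hgap hΘ hδ0 hc hδb
      (f : BoundedContinuousFunction ℝ ℂ).continuous (hmem f) x
    have h2 : 4 * CΘ * ∫ y in Set.Iic x, Real.exp (-η * (x - y)) * δ y ≤
        4 * CΘ * (1 / (8 * CΘ)) :=
      mul_le_mul_of_nonneg_left (hwle x) (by positivity)
    have h3 : 4 * CΘ * (1 / (8 * CΘ)) = 1 / 2 := by field_simp; ring
    linarith
  set Tmap : ↥B → ↥B := fun f =>
    ⟨BoundedContinuousFunction.ofNormedAddCommGroup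
      (TT M₁ M₂ δ Θ₁₁ Θ₁₂ Θ₂₁ Θ₂₂ (⇑(f : BoundedContinuousFunction ℝ ℂ)))
      (TT_continuous hη hCΘ' hM₁ hM₂ hδc h11 h12 h21 h22 hgap hΘ hδ0 hc hδb
        (f : BoundedContinuousFunction ℝ ℂ).continuous (hmem f)) 1 (hTTb f),
      by
        simp only [hBdef, Metric.mem_closedBall, dist_zero_right]
        exact BoundedContinuousFunction.norm_ofNormedAddCommGroup_le _ zero_le_one _⟩
    with hTmapdef
  have hcontr : ContractingWith (1/2 : ℝ≥0) Tmap := by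
    constructor
    · rw [← NNReal.coe_lt_coe]
      norm_num
    · refine LipschitzWith.of_dist_le_mul fun f g => ?_
      rw [Subtype.dist_eq, Subtype.dist_eq]
      have hd : (0:ℝ) ≤ dist (f : BoundedContinuousFunction ℝ ℂ)
          (g : BoundedContinuousFunction ℝ ℂ) := dist_nonneg
      refine (BoundedContinuousFunction.dist_le (by positivity)).mpr fun x => ?_
      have hdist : ∀ y : ℝ, ‖(f : BoundedContinuousFunction ℝ ℂ) y -
          (g : BoundedContinuousFunction ℝ ℂ) y‖ ≤
          dist (f : BoundedContinuousFunction ℝ ℂ) (g : BoundedContinuousFunction ℝ ℂ) :=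
        fun y => by
          rw [← dist_eq_norm]
          exact BoundedContinuousFunction.dist_coe_le_dist y
      have h1 := TT_sub_norm_le hη hCΘ' hM₁ hM₂ hδc h11 h12 h21 h22 hgap hΘ hδ0 hc hδb
        (f : BoundedContinuousFunction ℝ ℂ).continuous (hmem f)
        (g : BoundedContinuousFunction ℝ ℂ).continuous (hmem g) hd hdist x
      have h2 : 4 * CΘ * dist (f : BoundedContinuousFunction ℝ ℂ)
          (g : BoundedContinuousFunction ℝ ℂ) *
            (∫ y in Set.Iic x, Real.exp (-η * (x - y)) * δ y) ≤
          4 * CΘ * dist (f : BoundedContinuousFunction ℝ ℂ)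
            (g : BoundedContinuousFunction ℝ ℂ) * (1 / (8 * CΘ)) :=
        mul_le_mul_of_nonneg_left (hwle x) (by positivity)
      have h3 : 4 * CΘ * dist (f : BoundedContinuousFunction ℝ ℂ)
          (g : BoundedContinuousFunction ℝ ℂ) * (1 / (8 * CΘ)) =
          1 / 2 * dist (f : BoundedContinuousFunction ℝ ℂ)
            (g : BoundedContinuousFunction ℝ ℂ) := by
        field_simp
        ring
      have h4 : dist ((Tmap f : BoundedContinuousFunction ℝ ℂ) x)
          ((Tmap g : BoundedContinuousFunction ℝ ℂ) x) =
          ‖TT M₁ M₂ δ Θ₁₁ Θ₁₂ Θ₂₁ Θ₂₂ (⇑(f : BoundedContinuousFunction ℝ ℂ)) x -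
            TT M₁ M₂ δ Θ₁₁ Θ₁₂ Θ₂₁ Θ₂₂ (⇑(g : BoundedContinuousFunction ℝ ℂ)) x‖ :=
        dist_eq_norm _ _
      rw [h4]
      have : ((1/2 : ℝ≥0) : ℝ) = 1/2 := by norm_num
      rw [this]
      linarith
  set p : ↥B := ContractingWith.fixedPoint Tmap hcontr with hpdef
  have hfix : Tmap p = p := ContractingWith.fixedPoint_isFixedPt hcontr
  set Φ : ℝ → ℂ := ⇑((p : ↥B) : BoundedContinuousFunction ℝ ℂ) with hΦdef
  have hΦc : Continuous Φ := (p : BoundedContinuousFunction ℝ ℂ).continuous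
  have hΦb : ∀ y, ‖Φ y‖ ≤ 1 := hmem p
  have hTTeq : TT M₁ M₂ δ Θ₁₁ Θ₁₂ Θ₂₁ Θ₂₂ Φ = Φ :=
    congrArg (fun q : ↥B => ⇑((q : ↥B) : BoundedContinuousFunction ℝ ℂ)) hfix
  refine ⟨Φ, fun x => ?_, fun x => ?_, fun x => ?_⟩
  · have h := TT_hasDerivAt hη hCΘ' hM₁ hM₂ hδc h11 h12 h21 h22 hgap hΘ hδ0 hc hδb
      hΦc hΦb x
    rw [hTTeq] at h
    convert h using 1
    simp only [NN]
    ring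
  · have h := TT_norm_le hη hCΘ' hM₁ hM₂ hδc h11 h12 h21 h22 hgap hΘ hδ0 hc hδb
      hΦc hΦb x
    rw [hTTeq] at h
    exact h
  · set s : ℝ := sSup ((fun y => δ y / η) '' Set.Iic x) with hsdef
    have hbdd : BddAbove ((fun y => δ y / η) '' Set.Iic x) := by
      refine ⟨1 / (8 * CΘ), fun z hz => ?_⟩
      obtain ⟨y, _, rfl⟩ := hz
      rw [← hcη]
      show δ y / η ≤ c / η
      gcongr
      exact hδb y
    have hsx : ∀ y ∈ Set.Iic x, δ y / η ≤ s :=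
      fun y hy => le_csSup hbdd ⟨y, hy, rfl⟩
    have hs0 : 0 ≤ s :=
      le_trans (div_nonneg (hδ0 x) hη.le) (hsx x (Set.mem_Iic.mpr le_rfl))
    have hvy : ∀ y ∈ Set.Iic x, δ y ≤ η * s := by
      intro y hy
      have := hsx y hy
      calc δ y = η * (δ y / η) := by field_simp
        _ ≤ η * s := mul_le_mul_of_nonneg_left this hη.le
    have h1 := weight_integral_le hη hδc hδ0 (by positivity : (0:ℝ) ≤ η * s) hvy
    rw [mul_div_cancel_left₀ s hη.ne'] at h1
    exact mul_le_mul_of_nonneg_left h1 (by positivity)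

end Tracking

/-- Tracking lemma, scalar model case. For the system
`W₁' = M₁W₁ + δ(Θ₁₁W₁ + Θ₁₂W₂)`, `W₂' = M₂W₂ + δ(Θ₂₁W₁ + Θ₂₂W₂)` with
spectral gap `M₁ − M₂ ≥ η > 0`, bounded `Θ`, and `sup δ/η` sufficiently small,
there is a bounded `Φ` whose graph `{(W₁, ΦW₁)}` is invariant under the flow
(`Φ` solves the associated Riccati equation), with
`|Φ(x)| ≤ C ∫_{-∞}^x e^{-η(x-y)} δ(y) dy ≤ C sup_{(-∞,x]} (δ/η)`. -/
theorem tracking_lemma_scalar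
    (η CΘ : ℝ) (hη : 0 < η) (hCΘ : 0 < CΘ) :
    ∃ δ₀ : ℝ, 0 < δ₀ ∧ ∃ C : ℝ, 0 < C ∧
      ∀ (M₁ M₂ : ℝ → ℝ) (Θ₁₁ Θ₁₂ Θ₂₁ Θ₂₂ : ℝ → ℂ) (δ : ℝ → ℝ),
        Continuous M₁ → Continuous M₂ → Continuous δ →
        Continuous Θ₁₁ → Continuous Θ₁₂ → Continuous Θ₂₁ → Continuous Θ₂₂ →
        (∀ x, M₁ x - M₂ x ≥ η) →
        (∀ x, ‖Θ₁₁ x‖ ≤ CΘ ∧ ‖Θ₁₂ x‖ ≤ CΘ ∧ ‖Θ₂₁ x‖ ≤ CΘ ∧ ‖Θ₂₂ x‖ ≤ CΘ) →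
        (∀ x, 0 ≤ δ x) → (∀ x, δ x ≤ δ₀ * η) →
        ∃ Φ : ℝ → ℂ,
          (∀ x : ℝ, HasDerivAt Φ
            ((M₂ x : ℂ) * Φ x - Φ x * (M₁ x : ℂ) +
              (δ x : ℂ) * (Θ₂₁ x + Θ₂₂ x * Φ x - Φ x * Θ₁₁ x -
                Φ x * Θ₁₂ x * Φ x)) x) ∧
          (∀ x : ℝ,
            ‖Φ x‖ ≤ C * ∫ y in Set.Iic x, Real.exp (-η * (x - y)) * δ y) ∧
          (∀ x : ℝ,
            C * ∫ y in Set.Iic x, Real.exp (-η * (x - y)) * δ y ≤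
              C * sSup ((fun y => δ y / η) '' Set.Iic x)) := by
  refine ⟨1 / (8 * CΘ), by positivity, 4 * CΘ, by positivity, ?_⟩
  intro M₁ M₂ Θ₁₁ Θ₁₂ Θ₂₁ Θ₂₂ δ hM₁ hM₂ hδc h11 h12 h21 h22 hgap hΘ hδ0 hδb
  exact Tracking.main hη hCΘ hM₁ hM₂ hδc h11 h12 h21 h22 hgap hΘ hδ0 hδb
end
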